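/- arXiv:2307.10087 — 4 statements merged into one kernel-verified Lean document; each statement's English description precedes it below -/
import Mathlib

section
/- Let k : ℝ → ℝ be continuous and nonnegative with k(0) > 0, let k₁ = ∫₀¹ k(r) dr and K = max over x ∈ [0,1] of ∫₀¹ k(|x−y|) dy, and assume k₁ ≤ K and K/k₁² < 1. Then every continuous solution z : [0,1] → [0,1] of the equilibrium equation z(x) = (1 − z(x)) · ∫₀¹ z(y) k(|x−y|) dy that takes values in [(k₁−1)/k₁, (K−1)/K] is symmetric, i.e. z(x) = z(1−x) for all x ∈ [0,1]. -/
open Set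

/-- The kernel-weighted integral operator `χ[z](x) = ∫₀¹ z(y) k(|x−y|) dy`. -/
noncomputable def chi (k z : ℝ → ℝ) (x : ℝ) : ℝ := ∫ y in (0:ℝ)..1, z y * k |x - y|

lemma chi_reflect (k z : ℝ → ℝ) (x : ℝ) :
    chi k z (1 - x) = ∫ y in (0:ℝ)..1, z (1 - y) * k |x - y| := by
  unfold chi
  have h := intervalIntegral.integral_comp_sub_left
    (a := (0:ℝ)) (b := 1) (fun u => z u * k |(1 - x) - u|) 1
  simp only [sub_self, sub_zero] at h
  rw [← h]
  congr 1
  ext y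
  congr 2
  rw [show (1:ℝ) - x - (1 - y) = y - x by ring, abs_sub_comm]

/-- Under `k₁ ≤ K` and `K/k₁² < 1`, every continuous solution
`z : [0,1] → [0,1]` of the equilibrium equation taking values in
`[(k₁−1)/k₁, (K−1)/K]` is symmetric: `z(x) = z(1−x)`. -/
theorem solution_symmetric (k z : ℝ → ℝ) (k₁ K : ℝ)
    (hk_cont : Continuous k) (hk_nonneg : ∀ r, 0 ≤ k r) (hk0 : 0 < k 0)
    (hk₁ : k₁ = ∫ r in (0:ℝ)..1, k r)
    (hK : IsGreatest ((fun x => ∫ y in (0:ℝ)..1, k |x - y|) '' Icc 0 1) K)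
    (hk₁K : k₁ ≤ K) (hcontr : K / k₁ ^ 2 < 1)
    (hz_cont : ContinuousOn z (Icc 0 1))
    (hz_mem : ∀ x ∈ Icc (0:ℝ) 1, z x ∈ Icc (0:ℝ) 1)
    (hz_bounds : ∀ x ∈ Icc (0:ℝ) 1, z x ∈ Icc ((k₁ - 1) / k₁) ((K - 1) / K))
    (hz_eq : ∀ x ∈ Icc (0:ℝ) 1, z x = (1 - z x) * chi k z x) :
    ∀ x ∈ Icc (0:ℝ) 1, z x = z (1 - x) := by
  -- k₁ is positive
  have hk₁pos : 0 < k₁ := by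
    have hopen : IsOpen {r : ℝ | 0 < k r} := isOpen_lt continuous_const hk_cont
    obtain ⟨ε, hε, hball⟩ := Metric.isOpen_iff.mp hopen 0 hk0
    set c : ℝ := min ε 1 with hc
    have hc0 : 0 < c := lt_min hε one_pos
    have hc1 : c ≤ 1 := min_le_right _ _
    have hint1 : IntervalIntegrable k MeasureTheory.volume 0 c :=
      hk_cont.intervalIntegrable _ _
    have hint2 : IntervalIntegrable k MeasureTheory.volume c 1 :=
      hk_cont.intervalIntegrable _ _
    have h1 : 0 < ∫ r in (0:ℝ)..c, k r := by
      apply intervalIntegral.intervalIntegral_pos_of_pos_on hint1 _ hc0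
      intro x hx
      apply hball
      rw [Metric.mem_ball, Real.dist_eq, sub_zero, abs_of_pos hx.1]
      exact lt_of_lt_of_le hx.2 (min_le_left _ _)
    have h2 : 0 ≤ ∫ r in c..1, k r :=
      intervalIntegral.integral_nonneg hc1 (fun x _ => hk_nonneg x)
    have hsplit : (∫ r in (0:ℝ)..c, k r) + ∫ r in c..1, k r = ∫ r in (0:ℝ)..1, k r :=
      intervalIntegral.integral_add_adjacent_intervals hint1 hint2
    rw [hk₁, ← hsplit]
    linarith
  -- the reflection map and its continuity
  have hmaps : MapsTo (fun x : ℝ => 1 - x) (Icc 0 1) (Icc 0 1) := by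
    intro x hx
    simp only [mem_Icc] at hx ⊢
    constructor <;> linarith [hx.1, hx.2]
  have hw_cont : ContinuousOn (fun x : ℝ => z (1 - x)) (Icc 0 1) :=
    hz_cont.comp (continuous_const.sub continuous_id).continuousOn hmaps
  have hφ_cont : ContinuousOn (fun x : ℝ => |z x - z (1 - x)|) (Icc 0 1) :=
    (hz_cont.sub hw_cont).abs
  obtain ⟨x₀, hx₀, hmax⟩ := isCompact_Icc.exists_isMaxOn (f := fun x : ℝ => |z x - z (1 - x)|)
    ⟨0, by norm_num⟩ hφ_cont
  have hmax' : ∀ y ∈ Icc (0:ℝ) 1, |z y - z (1 - y)| ≤ |z x₀ - z (1 - x₀)| := hmax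
  set M : ℝ := |z x₀ - z (1 - x₀)| with hM
  have hMnn : 0 ≤ M := abs_nonneg _
  -- integrability facts
  have hkabs : ∀ x : ℝ, Continuous (fun y : ℝ => k |x - y|) := fun x =>
    hk_cont.comp ((continuous_const.sub continuous_id).abs)
  have huIcc : uIcc (0:ℝ) 1 = Icc 0 1 := uIcc_of_le zero_le_one
  have hint_z : ∀ x : ℝ, IntervalIntegrable (fun y => z y * k |x - y|)
      MeasureTheory.volume 0 1 := by
    intro x
    apply ContinuousOn.intervalIntegrable
    rw [huIcc]
    exact hz_cont.mul (hkabs x).continuousOn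
  have hint_w : ∀ x : ℝ, IntervalIntegrable (fun y => z (1 - y) * k |x - y|)
      MeasureTheory.volume 0 1 := by
    intro x
    apply ContinuousOn.intervalIntegrable
    rw [huIcc]
    exact hw_cont.mul (hkabs x).continuousOn
  -- key estimate on chi difference
  have hchi_diff : |chi k z x₀ - chi k z (1 - x₀)| ≤ M * K := by
    rw [chi_reflect]
    unfold chi
    rw [← intervalIntegral.integral_sub (hint_z x₀) (hint_w x₀)]
    calc |∫ y in (0:ℝ)..1, (z y * k |x₀ - y| - z (1 - y) * k |x₀ - y|)|
        ≤ ∫ y in (0:ℝ)..1, abs (z y * k |x₀ - y| - z (1 - y) * k |x₀ - y|) :=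
          intervalIntegral.abs_integral_le_integral_abs zero_le_one
      _ ≤ ∫ y in (0:ℝ)..1, M * k |x₀ - y| := by
          apply intervalIntegral.integral_mono_on zero_le_one
          · exact ((hint_z x₀).sub (hint_w x₀)).abs
          · exact (continuous_const.mul (hkabs x₀)).intervalIntegrable _ _
          · intro y hy
            rw [← sub_mul, abs_mul, abs_of_nonneg (hk_nonneg _)]
            exact mul_le_mul_of_nonneg_right (hmax' y hy) (hk_nonneg _)
      _ = M * ∫ y in (0:ℝ)..1, k |x₀ - y| := intervalIntegral.integral_const_mul _ _
      _ ≤ M * K := mul_le_mul_of_nonneg_left (hK.2 ⟨x₀, hx₀, rfl⟩) hMnn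
  -- set up the algebra at the maximum point
  have hKnn : 0 ≤ K := by
    obtain ⟨x', hx', hxe⟩ := hK.1
    rw [← hxe]
    exact intervalIntegral.integral_nonneg zero_le_one (fun y _ => hk_nonneg _)
  have hne : k₁ ≠ 0 := ne_of_gt hk₁pos
  have hk₁inv : (0:ℝ) ≤ 1 / k₁ := div_nonneg zero_le_one hk₁pos.le
  have hx₀' : (1 - x₀) ∈ Icc (0:ℝ) 1 := hmaps hx₀
  have ha : z x₀ = (1 - z x₀) * chi k z x₀ := hz_eq x₀ hx₀
  have hb : z (1 - x₀) = (1 - z (1 - x₀)) * chi k z (1 - x₀) := hz_eq (1 - x₀) hx₀'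
  have h1b : (1 - z (1 - x₀)) * (1 + chi k z (1 - x₀)) = 1 := by linear_combination -hb
  have h2 : (z x₀ - z (1 - x₀)) * (1 + chi k z (1 - x₀))
      = (1 - z x₀) * (chi k z x₀ - chi k z (1 - x₀)) := by linear_combination ha - hb
  have hkey : z x₀ - z (1 - x₀)
      = (1 - z x₀) * ((1 - z (1 - x₀)) * (chi k z x₀ - chi k z (1 - x₀))) := by
    calc z x₀ - z (1 - x₀)
        = (z x₀ - z (1 - x₀)) * ((1 - z (1 - x₀)) * (1 + chi k z (1 - x₀))) := by
          rw [h1b]; ring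
      _ = (1 - z (1 - x₀)) * ((z x₀ - z (1 - x₀)) * (1 + chi k z (1 - x₀))) := by ring
      _ = (1 - z (1 - x₀)) * ((1 - z x₀) * (chi k z x₀ - chi k z (1 - x₀))) := by rw [h2]
      _ = (1 - z x₀) * ((1 - z (1 - x₀)) * (chi k z x₀ - chi k z (1 - x₀))) := by ring
  -- bounds on 1 - z
  have hbound : ∀ x ∈ Icc (0:ℝ) 1, 0 ≤ 1 - z x ∧ 1 - z x ≤ 1 / k₁ := by
    intro x hx
    have h1 := (hz_mem x hx).2
    have h2 := (hz_bounds x hx).1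
    have heq : (k₁ - 1) / k₁ = 1 - 1 / k₁ := by field_simp
    rw [heq] at h2
    constructor <;> linarith
  obtain ⟨ha0, ha1⟩ := hbound x₀ hx₀
  obtain ⟨hb0, hb1⟩ := hbound (1 - x₀) hx₀'
  -- conclude M = 0
  have habs : |z x₀ - z (1 - x₀)| ≤ 1 / k₁ * (1 / k₁ * (M * K)) := by
    rw [hkey, abs_mul, abs_mul, abs_of_nonneg ha0, abs_of_nonneg hb0]
    exact mul_le_mul ha1
      (mul_le_mul hb1 hchi_diff (abs_nonneg _) hk₁inv)
      (mul_nonneg hb0 (abs_nonneg _)) hk₁inv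
  have hMle : M ≤ K / k₁ ^ 2 * M := by
    calc M = |z x₀ - z (1 - x₀)| := rfl
      _ ≤ 1 / k₁ * (1 / k₁ * (M * K)) := habs
      _ = K / k₁ ^ 2 * M := by field_simp
  have hM0 : M = 0 := by
    by_contra h
    have hMpos : 0 < M := lt_of_le_of_ne hMnn (Ne.symm h)
    nlinarith
  intro x hx
  have hle := hmax' x hx
  rw [hM0] at hle
  have h0 := abs_nonpos_iff.mp hle
  linarith [sub_eq_zero.mp h0]
end

section
/- Let k : ℝ → ℝ be continuous and nonnegative with k(0) > 0, and let z : [0,1] → [0,1] be a continuous solution of the equilibrium equation z(x) = (1 − z(x)) · ∫₀¹ z(y) k(|x−y|) dy for all x ∈ [0,1]. Then either z(x) = 0 for all x ∈ [0,1], or z(x) > 0 for all x ∈ [0,1]. -/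
/-!
A zero `x` of `z` forces `χ[z](x) = 0` by the equilibrium equation. The integrand `z(y) k(|x − y|)`
is continuous and nonnegative, so it vanishes on `[0,1]`; as `k(|x − y|) > 0` for `y` near `x`,
`z` vanishes near `x`. Thus the zero set of `z` is relatively open in `[0,1]`, and it is
relatively closed by continuity, so by connectedness it is empty or all of `[0,1]`.
-/

open Set Filter Topology

theorem IsPreconnected.forall_eq_or_forall_ne {X Y : Type*} [TopologicalSpace X]
    [TopologicalSpace Y] [T1Space Y] {s : Set X} {f : X → Y} {c : Y} (hs : IsPreconnected s)
    (hf : ContinuousOn f s) (hc : ∀ x ∈ s, f x = c → ∀ᶠ y in 𝓝[s] x, f y = c) :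
    (∀ x ∈ s, f x = c) ∨ (∀ x ∈ s, f x ≠ c) := by
  have hloc : ∀ x ∈ s, ∀ᶠ y in 𝓝[s] x, (f x = c ↔ f y = c) := by
    intro x hx
    by_cases hfx : f x = c
    · filter_upwards [hc x hx hfx] with y hy using iff_of_true hfx hy
    · filter_upwards [(hf x hx).eventually (eventually_ne_nhds hfx)] with y hy
        using iff_of_false hfx hy
  have hconst : ∀ x ∈ s, ∀ y ∈ s, (f x = c ↔ f y = c) := fun x hx y hy =>
    hs.induction₂ (fun x y => f x = c ↔ f y = c) hloc (fun _ _ _ _ _ _ => Iff.trans)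
      (fun _ _ _ _ => Iff.symm) hx hy
  refine or_iff_not_imp_right.2 fun h => ?_
  push Not at h
  obtain ⟨x, hx, hfx⟩ := h
  exact fun y hy => (hconst x hx y hy).mp hfx

theorem ContinuousOn.eqOn_zero_of_intervalIntegral_eq_zero {f : ℝ → ℝ} {a b : ℝ} (hab : a < b)
    (hf : ContinuousOn f (Icc a b)) (hnn : ∀ x ∈ Icc a b, 0 ≤ f x)
    (hint : ∫ x in a..b, f x = 0) : EqOn f 0 (Icc a b) := by
  intro x hx
  by_contra hne
  have hlt : (∫ _ in a..b, (0 : ℝ)) < ∫ x in a..b, f x :=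
    intervalIntegral.integral_lt_integral_of_continuousOn_of_le_of_exists_lt hab
      continuousOn_const hf (fun y hy => hnn y (Ioc_subset_Icc_self hy))
      ⟨x, hx, lt_of_le_of_ne (hnn x hx) (Ne.symm hne)⟩
  simp [hint] at hlt

theorem eventually_eq_zero_of_chi_eq_zero {k z : ℝ → ℝ} (hk_cont : Continuous k)
    (hk_nonneg : ∀ r, 0 ≤ k r) (hk0 : 0 < k 0) (hz_cont : ContinuousOn z (Icc 0 1))
    (hz_nonneg : ∀ y ∈ Icc (0:ℝ) 1, 0 ≤ z y) {x : ℝ} (hx : chi k z x = 0) :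
    ∀ᶠ y in 𝓝[Icc 0 1] x, z y = 0 := by
  have hkx : Continuous fun y => k |x - y| := by fun_prop
  have hintegrand : EqOn (fun y => z y * k |x - y|) 0 (Icc 0 1) :=
    (hz_cont.mul hkx.continuousOn).eqOn_zero_of_intervalIntegral_eq_zero zero_lt_one
      (fun y hy => mul_nonneg (hz_nonneg y hy) (hk_nonneg _)) hx
  have hk_near : ∀ᶠ y in 𝓝 x, 0 < k |x - y| :=
    continuousAt_const.eventually_lt hkx.continuousAt (by simpa using hk0)
  filter_upwards [self_mem_nhdsWithin, nhdsWithin_le_nhds hk_near] with y hy hky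
  exact (mul_eq_zero.mp (hintegrand hy)).resolve_right hky.ne'

/-- For `k` continuous, nonnegative with `k(0) > 0`, every continuous
solution `z : [0,1] → [0,1]` of the SIS equilibrium equation is either identically
zero on `[0,1]` or strictly positive on all of `[0,1]`. -/
theorem solution_zero_or_pos (k z : ℝ → ℝ)
    (hk_cont : Continuous k) (hk_nonneg : ∀ r, 0 ≤ k r) (hk0 : 0 < k 0)
    (hz_cont : ContinuousOn z (Icc 0 1))
    (hz_mem : ∀ x ∈ Icc (0:ℝ) 1, z x ∈ Icc (0:ℝ) 1)
    (hz_eq : ∀ x ∈ Icc (0:ℝ) 1, z x = (1 - z x) * chi k z x) :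
    (∀ x ∈ Icc (0:ℝ) 1, z x = 0) ∨ (∀ x ∈ Icc (0:ℝ) 1, 0 < z x) := by
  have hz_nonneg : ∀ x ∈ Icc (0:ℝ) 1, 0 ≤ z x := fun x hx => (hz_mem x hx).1
  have hzeros : ∀ x ∈ Icc (0:ℝ) 1, z x = 0 → ∀ᶠ y in 𝓝[Icc 0 1] x, z y = 0 := by
    intro x hx hzx
    have hchi : chi k z x = 0 := by simpa [hzx] using (hz_eq x hx).symm
    exact eventually_eq_zero_of_chi_eq_zero hk_cont hk_nonneg hk0 hz_cont hz_nonneg hchi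
  refine (isPreconnected_Icc.forall_eq_or_forall_ne hz_cont hzeros).imp_right ?_
  exact fun hne x hx => lt_of_le_of_ne (hz_nonneg x hx) (Ne.symm (hne x hx))
end

section
/- Let k : ℝ → ℝ be continuous and nonnegative with k(0) > 0, and suppose K = max over x ∈ [0,1] of ∫₀¹ k(|x−y|) dy satisfies K ≤ 1. Then every continuous solution z : [0,1] → [0,1] of the equilibrium equation z(x) = (1 − z(x)) · ∫₀¹ z(y) k(|x−y|) dy is identically zero, i.e. z(x) = 0 for all x ∈ [0,1]. -/
open Set

/-!
At a point `x₀` where `z` attains its maximum `M`, the equation and `K ≤ 1` give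
`M = (1 - M) χ[z](x₀) ≤ (1 - M) M K ≤ (1 - M) M`, hence `M² ≤ 0`.
-/

theorem chi_le_mul_integral {k z : ℝ → ℝ} {M : ℝ} (hk_cont : Continuous k)
    (hk_nonneg : ∀ r, 0 ≤ k r) (hz_cont : ContinuousOn z (Icc 0 1))
    (hz_le : ∀ y ∈ Icc (0:ℝ) 1, z y ≤ M) (x : ℝ) :
    chi k z x ≤ M * ∫ y in (0:ℝ)..1, k |x - y| := by
  have hk_x : Continuous fun y : ℝ => k |x - y| := by fun_prop
  rw [← intervalIntegral.integral_const_mul]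
  refine intervalIntegral.integral_mono_on zero_le_one ?_
    ((continuous_const.mul hk_x).intervalIntegrable 0 1)
    fun y hy => mul_le_mul_of_nonneg_right (hz_le y hy) (hk_nonneg _)
  exact (hz_cont.mul hk_x.continuousOn).intervalIntegrable_of_Icc zero_le_one

theorem eq_zero_of_eq_one_sub_mul_of_le {M c : ℝ} (hM : M ∈ Icc (0:ℝ) 1)
    (h_eq : M = (1 - M) * c) (hc : c ≤ M) : M = 0 := by
  have : M ≤ (1 - M) * M := h_eq.trans_le (mul_le_mul_of_nonneg_left hc (by linarith [hM.2]))
  nlinarith [hM.1]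

theorem no_nontrivial_solution_of_K_le_one_general (k z : ℝ → ℝ) (K : ℝ)
    (hk_cont : Continuous k) (hk_nonneg : ∀ r, 0 ≤ k r)
    (hK : IsGreatest ((fun x => ∫ y in (0:ℝ)..1, k |x - y|) '' Icc 0 1) K)
    (hK_le : K ≤ 1)
    (hz_cont : ContinuousOn z (Icc 0 1))
    (hz_mem : ∀ x ∈ Icc (0:ℝ) 1, z x ∈ Icc (0:ℝ) 1)
    (hz_eq : ∀ x ∈ Icc (0:ℝ) 1, z x = (1 - z x) * chi k z x) :
    ∀ x ∈ Icc (0:ℝ) 1, z x = 0 := by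
  obtain ⟨x₀, hx₀, hmax⟩ :=
    isCompact_Icc.exists_isMaxOn (nonempty_Icc.2 zero_le_one) hz_cont
  have hM_nonneg : 0 ≤ z x₀ := (hz_mem x₀ hx₀).1
  have hchi_le : chi k z x₀ ≤ z x₀ :=
    calc chi k z x₀ ≤ z x₀ * ∫ y in (0:ℝ)..1, k |x₀ - y| :=
          chi_le_mul_integral hk_cont hk_nonneg hz_cont (fun y hy => hmax hy) x₀
      _ ≤ z x₀ * 1 :=
          mul_le_mul_of_nonneg_left ((hK.2 ⟨x₀, hx₀, rfl⟩).trans hK_le) hM_nonneg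
      _ = z x₀ := mul_one _
  have hM_zero : z x₀ = 0 :=
    eq_zero_of_eq_one_sub_mul_of_le (hz_mem x₀ hx₀) (hz_eq x₀ hx₀) hchi_le
  intro x hx
  exact le_antisymm (hM_zero ▸ hmax hx) (hz_mem x hx).1

/-- If `K = max_{x ∈ [0,1]} ∫₀¹ k(|x−y|) dy ≤ 1`, then every continuous
solution `z : [0,1] → [0,1]` of the equilibrium equation is identically zero. -/
theorem no_nontrivial_solution_of_K_le_one (k z : ℝ → ℝ) (K : ℝ)
    (hk_cont : Continuous k) (hk_nonneg : ∀ r, 0 ≤ k r) (hk0 : 0 < k 0)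
    (hK : IsGreatest ((fun x => ∫ y in (0:ℝ)..1, k |x - y|) '' Icc 0 1) K)
    (hK_le : K ≤ 1)
    (hz_cont : ContinuousOn z (Icc 0 1))
    (hz_mem : ∀ x ∈ Icc (0:ℝ) 1, z x ∈ Icc (0:ℝ) 1)
    (hz_eq : ∀ x ∈ Icc (0:ℝ) 1, z x = (1 - z x) * chi k z x) :
    ∀ x ∈ Icc (0:ℝ) 1, z x = 0 :=
  no_nontrivial_solution_of_K_le_one_general k z K hk_cont hk_nonneg hK hK_le hz_cont hz_mem hz_eq
end

section
/- Let k : ℝ → ℝ be continuous and nonnegative with k(0) > 0, let K = max over x ∈ [0,1] of ∫₀¹ k(|x−y|) dy, and let z : [0,1] → [0,1] be a continuous solution of the equilibrium equation z(x) = (1 − z(x)) · ∫₀¹ z(y) k(|x−y|) dy that is not identically zero. Then for every natural number n ≥ 1 and every x ∈ [0,1], z(x) < K^n / (1 + K + K² + ⋯ + K^n). -/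
open Set

noncomputable def iterBound (K M : ℝ) : ℕ → ℝ
  | 0 => M
  | n+1 => K * iterBound K M n / (1 + K * iterBound K M n)

lemma iterBound_nonneg {K M : ℝ} (hK : 0 ≤ K) (hM : 0 ≤ M) (n : ℕ) :
    0 ≤ iterBound K M n := by
  induction n with
  | zero => exact hM
  | succ n ih =>
    have h1 : 0 ≤ K * iterBound K M n := mul_nonneg hK ih
    exact div_nonneg h1 (by linarith)

/-- Every nontrivial continuous solution `z : [0,1] → [0,1]` of the
equilibrium equation satisfies, for every `n ≥ 1` and every `x ∈ [0,1]`,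
`z(x) < K^n / (1 + K + K² + ⋯ + K^n)`. -/
theorem solution_upper_iterate_bound (k z : ℝ → ℝ) (K : ℝ)
    (hk_cont : Continuous k) (hk_nonneg : ∀ r, 0 ≤ k r) (hk0 : 0 < k 0)
    (hK : IsGreatest ((fun x => ∫ y in (0:ℝ)..1, k |x - y|) '' Icc 0 1) K)
    (hz_cont : ContinuousOn z (Icc 0 1))
    (hz_mem : ∀ x ∈ Icc (0:ℝ) 1, z x ∈ Icc (0:ℝ) 1)
    (hz_eq : ∀ x ∈ Icc (0:ℝ) 1, z x = (1 - z x) * chi k z x)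
    (hz_ne : ¬ ∀ x ∈ Icc (0:ℝ) 1, z x = 0) :
    ∀ n : ℕ, 1 ≤ n → ∀ x ∈ Icc (0:ℝ) 1,
      z x < K ^ n / ∑ i ∈ Finset.range (n + 1), K ^ i := by
  have hKub : ∀ x ∈ Icc (0:ℝ) 1, (∫ y in (0:ℝ)..1, k |x - y|) ≤ K :=
    fun x hx => hK.2 ⟨x, hx, rfl⟩
  -- K > 0
  have hKpos : 0 < K := by
    obtain ⟨δ, hδpos, hδ⟩ := Metric.continuousAt_iff.1 (hk_cont.continuousAt (x := 0)) (k 0 / 2) (by linarith)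
    set ε : ℝ := min (δ / 2) 1 with hε
    have hεpos : 0 < ε := lt_min (by linarith) one_pos
    have hε1 : ε ≤ 1 := min_le_right _ _
    have hpos : 0 < ∫ y in (0:ℝ)..ε, k |0 - y| := by
      apply intervalIntegral.intervalIntegral_pos_of_pos_on
      · exact ((hk_cont.comp (continuous_abs.comp (continuous_const.sub continuous_id))).continuousOn).intervalIntegrable
      · intro y hy
        have hyδ : dist (|(0:ℝ) - y|) (0:ℝ) < δ := by
          have habs : |(0:ℝ) - y| = y := by
            rw [abs_sub_comm, sub_zero, abs_of_nonneg hy.1.le]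
          rw [Real.dist_eq, habs, sub_zero, abs_of_nonneg hy.1.le]
          calc y < ε := hy.2
            _ ≤ δ / 2 := min_le_left _ _
            _ < δ := by linarith
        have h2 := hδ hyδ
        rw [Real.dist_eq] at h2
        have h3 := abs_lt.1 h2
        linarith [h3.1]
      · exact hεpos
    have hsplit : (∫ y in (0:ℝ)..1, k |0 - y|) =
        (∫ y in (0:ℝ)..ε, k |0 - y|) + ∫ y in ε..1, k |0 - y| := by
      rw [intervalIntegral.integral_add_adjacent_intervals] <;>
        exact ((hk_cont.comp (continuous_abs.comp (continuous_const.sub continuous_id))).continuousOn).intervalIntegrable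
    have h2 : 0 ≤ ∫ y in ε..1, k |0 - y| :=
      intervalIntegral.integral_nonneg hε1 (fun u _ => hk_nonneg _)
    have h3 : (0:ℝ) < ∫ y in (0:ℝ)..1, k |0 - y| := by rw [hsplit]; linarith
    calc (0:ℝ) < _ := h3
      _ ≤ K := hKub 0 (by norm_num)
  -- integrability
  have hintz : ∀ x : ℝ, IntervalIntegrable (fun y => z y * k |x - y|) MeasureTheory.volume 0 1 := by
    intro x
    apply ContinuousOn.intervalIntegrable
    rw [uIcc_of_le (by norm_num : (0:ℝ) ≤ 1)]
    exact hz_cont.mul ((hk_cont.comp (continuous_abs.comp (continuous_const.sub continuous_id))).continuousOn)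
  have hintk : ∀ x : ℝ, IntervalIntegrable (fun y => k |x - y|) MeasureTheory.volume 0 1 :=
    fun x => ((hk_cont.comp (continuous_abs.comp (continuous_const.sub continuous_id))).continuousOn).intervalIntegrable
  -- chi nonneg
  have hchi_nonneg : ∀ x ∈ Icc (0:ℝ) 1, 0 ≤ chi k z x := fun x hx =>
    intervalIntegral.integral_nonneg (by norm_num)
      (fun u hu => mul_nonneg (hz_mem u hu).1 (hk_nonneg _))
  -- z < 1
  have hz_lt_one : ∀ x ∈ Icc (0:ℝ) 1, z x < 1 := by
    intro x hx
    rcases lt_or_eq_of_le (hz_mem x hx).2 with h | h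
    · exact h
    · exfalso
      have := hz_eq x hx
      rw [h] at this
      simp at this
  -- max of z
  obtain ⟨x₀, hx₀, hmax⟩ := isCompact_Icc.exists_isMaxOn (s := Icc (0:ℝ) 1)
    (Set.nonempty_Icc.2 (by norm_num)) hz_cont
  set M : ℝ := z x₀ with hMdef
  have hM0 : 0 ≤ M := (hz_mem x₀ hx₀).1
  have hM1 : M < 1 := hz_lt_one x₀ hx₀
  have hMle : ∀ x ∈ Icc (0:ℝ) 1, z x ≤ M := fun x hx => hmax hx
  -- z = chi/(1+chi)
  have hz_formula : ∀ x ∈ Icc (0:ℝ) 1, z x = chi k z x / (1 + chi k z x) := by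
    intro x hx
    have h1 : 0 < 1 + chi k z x := by linarith [hchi_nonneg x hx]
    have := hz_eq x hx
    field_simp
    linarith [this, mul_comm (z x) (chi k z x)]
  -- key step: pointwise bound propagates
  have hstep : ∀ c : ℝ, 0 ≤ c → (∀ y ∈ Icc (0:ℝ) 1, z y ≤ c) →
      ∀ x ∈ Icc (0:ℝ) 1, z x ≤ K * c / (1 + K * c) := by
    intro c hc hbd x hx
    have hchiK : chi k z x ≤ c * K := by
      have h1 : chi k z x ≤ ∫ y in (0:ℝ)..1, c * k |x - y| := by
        apply intervalIntegral.integral_mono_on (by norm_num) (hintz x)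
          ((hintk x).const_mul c)
        intro y hy
        exact mul_le_mul_of_nonneg_right (hbd y hy) (hk_nonneg _)
      have h2 : (∫ y in (0:ℝ)..1, c * k |x - y|) = c * ∫ y in (0:ℝ)..1, k |x - y| :=
        intervalIntegral.integral_const_mul _ _
      calc chi k z x ≤ c * ∫ y in (0:ℝ)..1, k |x - y| := by rw [← h2]; exact h1
        _ ≤ c * K := mul_le_mul_of_nonneg_left (hKub x hx) hc
    rw [hz_formula x hx]
    have hχ := hchi_nonneg x hx
    have h1 : 0 < 1 + chi k z x := by linarith
    have h2 : 0 < 1 + K * c := by positivity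
    rw [div_le_div_iff₀ h1 h2]
    nlinarith [hchiK]
  -- z ≤ iterBound K M n
  have hzle : ∀ n : ℕ, ∀ x ∈ Icc (0:ℝ) 1, z x ≤ iterBound K M n := by
    intro n
    induction n with
    | zero => exact hMle
    | succ n ih =>
      exact hstep _ (iterBound_nonneg hKpos.le hM0 n) ih
  -- sums positive
  have hS : ∀ n : ℕ, 0 < ∑ i ∈ Finset.range (n + 1), K ^ i := by
    intro n
    exact Finset.sum_pos (fun i _ => pow_pos hKpos i) ⟨0, Finset.mem_range.2 (Nat.succ_pos n)⟩
  -- iterBound < b n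
  have hlt : ∀ n : ℕ, iterBound K M n < K ^ n / ∑ i ∈ Finset.range (n + 1), K ^ i := by
    intro n
    induction n with
    | zero => simpa [iterBound] using hM1
    | succ n ih =>
      have hb_nonneg : 0 ≤ iterBound K M n := iterBound_nonneg hKpos.le hM0 n
      have hb_rec : K ^ (n+1) / ∑ i ∈ Finset.range (n + 2), K ^ i =
          K * (K ^ n / ∑ i ∈ Finset.range (n + 1), K ^ i) /
            (1 + K * (K ^ n / ∑ i ∈ Finset.range (n + 1), K ^ i)) := by
        have h1 := hS n
        have h2 := hS (n+1)
        rw [Finset.sum_range_succ] at h2 ⊢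
        generalize (∑ i ∈ Finset.range (n + 1), K ^ i) = S at h1 h2 ⊢
        rw [pow_succ] at h2 ⊢
        have hS : S ≠ 0 := h1.ne'
        rw [eq_div_iff (by have := mul_pos hKpos (div_pos (pow_pos hKpos n) h1); linarith),
          div_mul_eq_mul_div, div_eq_iff h2.ne']
        field_simp
      rw [hb_rec]
      show iterBound K M (n+1) < _
      rw [iterBound]
      set a := iterBound K M n
      set b := K ^ n / ∑ i ∈ Finset.range (n + 1), K ^ i
      have hbpos : 0 < b := lt_of_le_of_lt hb_nonneg ih
      have h1 : 0 < 1 + K * a := by positivity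
      have h2 : 0 < 1 + K * b := by have := mul_pos hKpos hbpos; linarith
      rw [div_lt_div_iff₀ h1 h2]
      nlinarith [ih]
  intro n _ x hx
  exact lt_of_le_of_lt (hzle n x hx) (hlt n)
end
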